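/- Let a reaction network N be given by α, β ∈ ℕ^{n×ν} with Γ = β − α, admissible Jacobian set 𝒦, and r = rank Γ. Assume N has no catalytic reactions (for all i, j, not both α_{ij} > 0 and β_{ij} > 0). Fix a species i and let Ñ be obtained from N by adding a catalyst X_i⁻: Ñ has n+1 species and the same ν reactions, where rows 1,…,n of α̃ and β̃ equal those of α and β, row n+1 of α̃ equals row i of β, and row n+1 of β̃ equals row i of α. Set Γ̃ = β̃ − α̃, r̃ = rank Γ̃, and let 𝒦̃ be the admissible Jacobian set of Ñ. Assume: N is robustly P0; N is robustly non-degenerate; and Ñ is robustly P0. Then Ñ is robustly non-degenerate: for every Ṽ ∈ 𝒦̃ the sum of all r̃×r̃ principal minors of −Γ̃Ṽ is nonzero. -/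

import Mathlib

open Matrix Finset

/-- The principal minor of a square matrix `M` indexed by the set `I`. -/
noncomputable def principalMinor {n : ℕ} (M : Matrix (Fin n) (Fin n) ℝ) (I : Finset (Fin n)) : ℝ :=
  (M.submatrix (fun i : {x // x ∈ I} => (i : Fin n)) (fun i : {x // x ∈ I} => (i : Fin n))).det

/-- The sum of all `r × r` principal minors of the square matrix `M`. -/
noncomputable def sumMinors {n : ℕ} (r : ℕ) (M : Matrix (Fin n) (Fin n) ℝ) : ℝ :=
  ∑ I ∈ Finset.univ.powersetCard r, principalMinor M I

/-- The admissible Jacobian set: `V j i > 0` whenever `X i` is a reactant of reaction `j`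
    (i.e. `α i j > 0`) and `V j i = 0` otherwise. -/
def admissible {n ν : ℕ} (α : Matrix (Fin n) (Fin ν) ℕ) (V : Matrix (Fin ν) (Fin n) ℝ) : Prop :=
  ∀ i j, (0 < α i j → 0 < V j i) ∧ (α i j = 0 → V j i = 0)

/-- The stoichiometry matrix `Γ = β - α` (entries cast to `ℝ`). -/
def gam {n ν : ℕ} (α β : Matrix (Fin n) (Fin ν) ℕ) : Matrix (Fin n) (Fin ν) ℝ :=
  fun i j => (β i j : ℝ) - (α i j : ℝ)

/-!
The catalyst row of `Γ̃` is minus row `i` of `Γ`, so `rank Γ̃ = rank Γ =: r`. Restricting an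
admissible `Ṽ` to the old species gives an admissible `V` for `N`, and `−ΓV` is the leading
`n × n` block of `−Γ̃Ṽ`. So the `r × r` principal minors of `−ΓV` are among those of `−Γ̃Ṽ`.
All of these are nonnegative by the `P₀` hypotheses, and those of `−ΓV` have positive sum by
non-degeneracy of `N`; hence so do those of `−Γ̃Ṽ`.
-/

theorem Matrix.rank_eq_rank_submatrix_castSucc_of_mem_span {R ν : Type*} [Field R] [Fintype ν]
    {n : ℕ} (M : Matrix (Fin (n + 1)) ν R)
    (h : M (Fin.last n) ∈ Submodule.span R (Set.range (M.submatrix Fin.castSucc id).row)) :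
    M.rank = (M.submatrix Fin.castSucc id).rank := by
  have hrows : Fin.snoc (M.submatrix Fin.castSucc id).row (M (Fin.last n)) = M.row :=
    Fin.snoc_init_self M
  rw [rank_eq_finrank_span_row, rank_eq_finrank_span_row, ← Submodule.span_insert_eq_span h,
    ← Fin.range_snoc, hrows]

theorem principalMinor_map {m n : ℕ} (M : Matrix (Fin n) (Fin n) ℝ) (e : Fin m ↪ Fin n)
    (I : Finset (Fin m)) :
    principalMinor M (I.map e) = principalMinor (M.submatrix e e) I :=
  (det_submatrix_equiv_self (I.equivMap e) _).symm

theorem sumMinors_nonneg {n : ℕ} (r : ℕ) {M : Matrix (Fin n) (Fin n) ℝ}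
    (hM : ∀ I, 0 ≤ principalMinor M I) : 0 ≤ sumMinors r M :=
  Finset.sum_nonneg fun I _ => hM I

theorem sumMinors_submatrix_le {m n : ℕ} (r : ℕ) {M : Matrix (Fin n) (Fin n) ℝ}
    (hM : ∀ I, 0 ≤ principalMinor M I) (e : Fin m ↪ Fin n) :
    sumMinors r (M.submatrix e e) ≤ sumMinors r M := by
  calc sumMinors r (M.submatrix e e)
      = ∑ J ∈ (univ.powersetCard r).map (mapEmbedding e).toEmbedding, principalMinor M J := by
        simp only [sumMinors, sum_map, RelEmbedding.coe_toEmbedding, mapEmbedding_apply,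
          principalMinor_map]
    _ ≤ sumMinors r M := by
        refine sum_le_sum_of_subset_of_nonneg ?_ fun J _ _ => hM J
        rw [← powersetCard_map]
        exact powersetCard_mono (subset_univ _)

theorem admissible.submatrix {m n ν : ℕ} {α : Matrix (Fin n) (Fin ν) ℕ}
    {V : Matrix (Fin ν) (Fin n) ℝ} (hV : admissible α V) (e : Fin m → Fin n) :
    admissible (α.submatrix e id) (V.submatrix id e) :=
  fun i j => hV (e i) j

theorem nondeg_add_catalyst_general (n ν : ℕ) (α β : Matrix (Fin n) (Fin ν) ℕ)
    (i0 : Fin n)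
    (αt βt : Matrix (Fin (n + 1)) (Fin ν) ℕ)
    (hαold : ∀ (i : Fin n) (j : Fin ν), αt i.castSucc j = α i j)
    (hβold : ∀ (i : Fin n) (j : Fin ν), βt i.castSucc j = β i j)
    (hαnew : ∀ j : Fin ν, αt (Fin.last n) j = β i0 j)
    (hβnew : ∀ j : Fin ν, βt (Fin.last n) j = α i0 j)
    (hP0 : ∀ V, admissible α V → ∀ I : Finset (Fin n),
      0 ≤ principalMinor (-(gam α β * V)) I)
    (hND : ∀ V, admissible α V →
      sumMinors (gam α β).rank (-(gam α β * V)) ≠ 0)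
    (hP0t : ∀ V, admissible αt V → ∀ I : Finset (Fin (n + 1)),
      0 ≤ principalMinor (-(gam αt βt * V)) I) :
    ∀ V, admissible αt V →
      sumMinors (gam αt βt).rank (-(gam αt βt * V)) ≠ 0 := by
  intro Vt hVt
  have hα : αt.submatrix Fin.castSucc id = α := Matrix.ext hαold
  have hΓ : (gam αt βt).submatrix Fin.castSucc id = gam α β :=
    Matrix.ext fun i j => by simp [gam, hαold, hβold]
  have hΓlast : gam αt βt (Fin.last n) = -gam α β i0 :=
    funext fun j => by simp [gam, hαnew, hβnew]
  have hlast_mem : gam αt βt (Fin.last n) ∈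
      Submodule.span ℝ (Set.range ((gam αt βt).submatrix Fin.castSucc id).row) := by
    rw [hΓlast, hΓ]
    exact Submodule.neg_mem _ (Submodule.subset_span ⟨i0, rfl⟩)
  have hrank : (gam αt βt).rank = (gam α β).rank := by
    rw [rank_eq_rank_submatrix_castSucc_of_mem_span _ hlast_mem, hΓ]
  set V := Vt.submatrix id Fin.castSucc
  have hV : admissible α V := hα ▸ hVt.submatrix Fin.castSucc
  have hblock : (-(gam αt βt * Vt)).submatrix Fin.castSuccEmb Fin.castSuccEmb =
      -(gam α β * V) := by
    rw [Fin.coe_castSuccEmb, submatrix_neg, Pi.neg_apply, Pi.neg_apply,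
      submatrix_mul _ _ _ id _ Function.bijective_id, hΓ]
  have hpos : 0 < sumMinors (gam α β).rank (-(gam α β * V)) :=
    (sumMinors_nonneg _ (hP0 V hV)).lt_of_ne (hND V hV).symm
  rw [hrank]
  exact (hpos.trans_le (hblock ▸ sumMinors_submatrix_le _ (hP0t Vt hVt) Fin.castSuccEmb)).ne'

/-- Robust non-degeneracy is preserved by adding a catalyst species `X i⁻`
(a product exactly where `X i` is a reactant and vice versa), for robustly `P₀`
networks without catalytic reactions. -/
theorem nondeg_add_catalyst (n ν : ℕ) (α β : Matrix (Fin n) (Fin ν) ℕ)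
    (hcat : ∀ i j, ¬(0 < α i j ∧ 0 < β i j))
    (i0 : Fin n)
    (αt βt : Matrix (Fin (n + 1)) (Fin ν) ℕ)
    (hαold : ∀ (i : Fin n) (j : Fin ν), αt i.castSucc j = α i j)
    (hβold : ∀ (i : Fin n) (j : Fin ν), βt i.castSucc j = β i j)
    (hαnew : ∀ j : Fin ν, αt (Fin.last n) j = β i0 j)
    (hβnew : ∀ j : Fin ν, βt (Fin.last n) j = α i0 j)
    (hP0 : ∀ V, admissible α V → ∀ I : Finset (Fin n),
      0 ≤ principalMinor (-(gam α β * V)) I)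
    (hND : ∀ V, admissible α V →
      sumMinors (gam α β).rank (-(gam α β * V)) ≠ 0)
    (hP0t : ∀ V, admissible αt V → ∀ I : Finset (Fin (n + 1)),
      0 ≤ principalMinor (-(gam αt βt * V)) I) :
    ∀ V, admissible αt V →
      sumMinors (gam αt βt).rank (-(gam αt βt * V)) ≠ 0 :=
  nondeg_add_catalyst_general n ν α β i0 αt βt hαold hβold hαnew hβnew hP0 hND hP0t
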